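/- Let E be a finite set, p ≥ 2 an integer, M > 1, and K : {X : X ⊆ E} → ℝ with K(X) = 0 whenever |X| > p; set ||K|| = sup_{e ∈ E} Σ_{X : e ∈ X} |K(X)|. For n ≥ 1 and e ∈ E, let a_n(e) = Σ_{Γ connected, |Γ| = n, e ∈ ∪Γ} Π_{X ∈ Γ} 2|K(X)| M^{|X|} and a_n = sup_{e ∈ E} a_n(e). Then a_1 ≤ 2||K||M^p, and for all n ≥ 1 the recursive bound a_n ≤ 2||K||M^p Σ_{k=0}^{p} C(p,k) Σ_{n_1 + … + n_k = n−1, n_i ≥ 1} a_{n_1} ⋯ a_{n_k} holds, where C(p,k) is the binomial coefficient (the k = 0 term being the empty product 1 when n = 1). -/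

import Mathlib

open Finset

attribute [local instance] Classical.propDecidable

/-- A hypergraph `Γ` (a finite collection of subsets/links of `E`) is connected if its support
`∪Γ` is nonempty and cannot be partitioned into two nonempty disjoint parts such that every
link lies entirely inside one of the two parts. -/
def HyperConnected {E : Type*} [DecidableEq E] (Γ : Finset (Finset E)) : Prop :=
  (Γ.sup id).Nonempty ∧
    ∀ A B : Finset E, A ∪ B = Γ.sup id → Disjoint A B → A.Nonempty → B.Nonempty →
      ∃ X ∈ Γ, ¬ X ⊆ A ∧ ¬ X ⊆ B

/-- `a_n(e)`: the contribution of connected hypergraphs with `n` links rooted at `e`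
(i.e. `e ∈ ∪Γ`), each link `X` carrying the factor `2|K(X)| M^{|X|}`. -/
noncomputable def rootedContribution {E : Type*} [Fintype E] [DecidableEq E]
    (K : Finset E → ℝ) (M : ℝ) (n : ℕ) (e : E) : ℝ :=
  ∑ Γ ∈ Finset.univ.filter (fun Γ : Finset (Finset E) =>
      (∀ X ∈ Γ, X.Nonempty) ∧ HyperConnected Γ ∧ Γ.card = n ∧ e ∈ Γ.sup id),
    ∏ X ∈ Γ, (2 * |K X| * M ^ X.card)

/-- `a_n = sup_{e ∈ E} a_n(e)`. -/
noncomputable def rootedSup {E : Type*} [Fintype E] [DecidableEq E]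
    (K : Finset E → ℝ) (M : ℝ) (n : ℕ) : ℝ :=
  ⨆ e : E, rootedContribution K M n e

/-! Every connected `Γ` with `n` links rooted at `e` contains a link `X₁ ∋ e`, and the
components of `Γ \ {X₁}` all meet `X₁`. Rooting each component at its smallest point in `X₁`
makes `Γ ↦ (X₁, S, (component rooted at s)_{s ∈ S})`, with `S ⊆ X₁` the set of roots, an
injection; the components are connected hypergraphs rooted at the points of `S`, with sizes
forming a composition of `n - 1` into `|S|` positive parts. Summing over `S ⊆ X₁` produces
the factor `C(|X₁|, k) ≤ C(p, k)`, and `K X₁ = 0` unless `|X₁| ≤ p` gives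
`M ^ |X₁| ≤ M ^ p`. -/

namespace ClusterExpansion

variable {E : Type*} {Γ : Finset (Finset E)} {X X₁ U : Finset E} {a b x : E}

def linkWeight (K : Finset E → ℝ) (M : ℝ) (X : Finset E) : ℝ := 2 * |K X| * M ^ X.card

theorem linkWeight_nonneg {K : Finset E → ℝ} {M : ℝ} (hM : 0 ≤ M) (X : Finset E) :
    0 ≤ linkWeight K M X :=
  mul_nonneg (by positivity) (pow_nonneg hM _)

def Joined (Γ : Finset (Finset E)) : E → E → Prop :=
  Relation.ReflTransGen fun a b => ∃ X ∈ Γ, a ∈ X ∧ b ∈ X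

theorem joined_of_mem (hX : X ∈ Γ) (ha : a ∈ X) (hb : b ∈ X) : Joined Γ a b :=
  .single ⟨X, hX, ha, hb⟩

theorem Joined.symm (h : Joined Γ a b) : Joined Γ b a := by
  induction h with
  | refl => exact .refl
  | tail _ hstep ih =>
    obtain ⟨X, hX, hb, hc⟩ := hstep
    exact ih.head ⟨X, hX, hc, hb⟩

theorem Joined.trans {c : E} (hab : Joined Γ a b) (hbc : Joined Γ b c) : Joined Γ a c :=
  Relation.ReflTransGen.trans hab hbc

noncomputable def component (Γ : Finset (Finset E)) (a : E) : Finset (Finset E) :=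
  Γ.filter fun X => ∃ x ∈ X, Joined Γ a x

theorem mem_component : X ∈ component Γ a ↔ X ∈ Γ ∧ ∃ x ∈ X, Joined Γ a x := mem_filter

theorem component_subset : component Γ a ⊆ Γ := filter_subset _ _

theorem joined_of_mem_component (hX : X ∈ component Γ a) (hx : x ∈ X) : Joined Γ a x := by
  obtain ⟨hXΓ, y, hy, hay⟩ := mem_component.1 hX
  exact hay.trans (joined_of_mem hXΓ hy hx)

theorem Joined.joined_component (h : Joined Γ a b) : Joined (component Γ a) a b := by
  induction h with
  | refl => exact .refl
  | tail hab hstep ih =>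
    obtain ⟨X, hX, hb, hc⟩ := hstep
    exact ih.tail ⟨X, mem_component.2 ⟨hX, _, hb, hab⟩, hb, hc⟩

variable [DecidableEq E]

theorem Joined.mem_sup (h : Joined Γ a b) (ha : a ∈ Γ.sup id) : b ∈ Γ.sup id := by
  induction h with
  | refl => exact ha
  | tail _ hstep _ =>
    obtain ⟨X, hX, -, hc⟩ := hstep
    exact Finset.mem_sup.2 ⟨X, hX, hc⟩

theorem mem_sup_component : b ∈ (component Γ a).sup id ↔ b ∈ Γ.sup id ∧ Joined Γ a b := by
  simp only [mem_sup, id]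
  constructor
  · rintro ⟨X, hX, hb⟩
    exact ⟨⟨X, component_subset hX, hb⟩, joined_of_mem_component hX hb⟩
  · rintro ⟨⟨X, hX, hb⟩, hab⟩
    exact ⟨X, mem_component.2 ⟨hX, b, hb, hab⟩, hb⟩

theorem hyperConnected_of_joined (ha : a ∈ Γ.sup id)
    (hjoin : ∀ b ∈ Γ.sup id, Joined Γ a b) : HyperConnected Γ := by
  refine ⟨⟨a, ha⟩, fun A B hAB hdisj ⟨x, hx⟩ ⟨y, hy⟩ => ?_⟩
  by_contra! hsplit
  have hsup : ∀ z ∈ A ∪ B, Joined Γ a z := fun z hz => hjoin z (hAB ▸ hz)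
  have hxy : Joined Γ x y :=
    (hsup x (mem_union_left _ hx)).symm.trans (hsup y (mem_union_right _ hy))
  suffices ∀ z, Joined Γ x z → z ∈ A from disjoint_left.1 hdisj (this y hxy) hy
  intro z hz
  induction hz with
  | refl => exact hx
  | tail _ hstep ih =>
    obtain ⟨X, hX, hu, hv⟩ := hstep
    by_cases hXA : X ⊆ A
    · exact hXA hv
    · exact absurd (hsplit X hX hXA hu) (disjoint_left.1 hdisj ih)

theorem hyperConnected_component (ha : a ∈ Γ.sup id) : HyperConnected (component Γ a) :=
  hyperConnected_of_joined (mem_sup_component.2 ⟨ha, .refl⟩) fun _ hb =>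
    (mem_sup_component.1 hb).2.joined_component

theorem _root_.HyperConnected.sup_subset_of_forall_subset_or_disjoint
    (hΓ : HyperConnected Γ) (hU : U ⊆ Γ.sup id) (hU₀ : U.Nonempty)
    (hsplit : ∀ X ∈ Γ, X ⊆ U ∨ Disjoint X U) : Γ.sup id ⊆ U := by
  by_contra hsub
  obtain ⟨X, hX, hXU, hXV⟩ := hΓ.2 U (Γ.sup id \ U) (union_sdiff_of_subset hU)
    disjoint_sdiff hU₀ (sdiff_nonempty.2 hsub)
  refine hXV fun x hx => mem_sdiff.2 ⟨le_sup (f := id) hX hx, ?_⟩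
  exact disjoint_left.1 ((hsplit X hX).resolve_left hXU) hx

theorem _root_.HyperConnected.exists_joined_of_insert (h : HyperConnected (insert X₁ Γ))
    (hX₁ : X₁.Nonempty) (ha : a ∈ Γ.sup id) : ∃ s ∈ X₁, Joined Γ a s := by
  by_contra! hfar
  set C := (component Γ a).sup id
  have hsplit : ∀ X ∈ insert X₁ Γ, X ⊆ C ∨ Disjoint X C := by
    intro X hX
    rcases mem_insert.1 hX with rfl | hXΓ
    · exact Or.inr (disjoint_left.2 fun s hs hsC => hfar s hs (mem_sup_component.1 hsC).2)
    · by_cases hXC : Disjoint X C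
      · exact Or.inr hXC
      · obtain ⟨x, hxX, hxC⟩ := not_disjoint_iff.1 hXC
        exact Or.inl (le_sup (f := id)
          (mem_component.2 ⟨hXΓ, x, hxX, (mem_sup_component.1 hxC).2⟩))
  obtain ⟨s, hs⟩ := hX₁
  have hsC := h.sup_subset_of_forall_subset_or_disjoint
    (sup_mono (component_subset.trans (subset_insert _ _)))
    ⟨a, mem_sup_component.2 ⟨ha, .refl⟩⟩ hsplit (le_sup (f := id) (mem_insert_self X₁ Γ) hs)
  exact hfar s hs (mem_sup_component.1 hsC).2

theorem sum_comp_le_sum_of_injOn {α β : Type*} {s : Finset α} {t : Finset β} {g : β → ℝ}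
    (φ : α → β) (hφ : Set.MapsTo φ s t) (hinj : Set.InjOn φ s) (hg : ∀ b ∈ t, 0 ≤ g b) :
    ∑ a ∈ s, g (φ a) ≤ ∑ b ∈ t, g b := by
  classical
  rw [← sum_image hinj]
  exact sum_le_sum_of_subset_of_nonneg (image_subset_iff.2 hφ) fun b hb _ => hg b hb

variable [Fintype E]

noncomputable def connectedRootedAt (n : ℕ) (e : E) : Finset (Finset (Finset E)) :=
  univ.filter fun Γ : Finset (Finset E) =>
    (∀ X ∈ Γ, X.Nonempty) ∧ HyperConnected Γ ∧ Γ.card = n ∧ e ∈ Γ.sup id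

/-- The hypergraphs `Γ.erase X₁` for the connected `Γ ∋ X₁` with `m + 1` nonempty links. -/
noncomputable def connectedExtensions (X₁ : Finset E) (m : ℕ) : Finset (Finset (Finset E)) :=
  univ.filter fun Γ : Finset (Finset E) =>
    X₁ ∉ Γ ∧ (∀ X ∈ Γ, X.Nonempty) ∧ HyperConnected (insert X₁ Γ) ∧ Γ.card = m

/-- `Σ_{n_1 + ⋯ + n_k = m, n_i ≥ 1} A n_1 ⋯ A n_k` -/
noncomputable def compositionSum (A : ℕ → ℝ) (k m : ℕ) : ℝ :=
  ∑ t ∈ (Finset.Nat.antidiagonalTuple k m).filter (fun t => ∀ i, 1 ≤ t i), ∏ i, A (t i)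

theorem component_mem_connectedRootedAt (hne : ∀ X ∈ Γ, X.Nonempty) (ha : a ∈ Γ.sup id) :
    component Γ a ∈ connectedRootedAt (component Γ a).card a :=
  mem_filter.2 ⟨mem_univ _, fun X hX => hne X (component_subset hX),
    hyperConnected_component ha, rfl, mem_sup_component.2 ⟨ha, .refl⟩⟩

theorem one_le_card_of_mem_connectedRootedAt {n : ℕ} (hΓ : Γ ∈ connectedRootedAt n a) :
    1 ≤ Γ.card := by
  obtain ⟨X, hX, -⟩ := Finset.mem_sup.1 (mem_filter.1 hΓ).2.2.2.2
  exact card_pos.2 ⟨X, hX⟩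

variable {w : Finset E → ℝ} {A : ℕ → ℝ}

theorem sum_prod_le_compositionSum {F : Finset (Finset (Finset E))} {k m : ℕ} (σ : Fin k → E)
    (c : Finset (Finset E) → Fin k → Finset (Finset E)) (hw : ∀ X, 0 ≤ w X)
    (hA : ∀ s n, ∑ C ∈ connectedRootedAt n s, ∏ X ∈ C, w X ≤ A n)
    (hcard : ∀ Γ ∈ F, Γ.card = m) (hunion : ∀ Γ ∈ F, univ.biUnion (c Γ) = Γ)
    (hdisj : ∀ Γ ∈ F, Pairwise fun i j => Disjoint (c Γ i) (c Γ j))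
    (hconn : ∀ Γ ∈ F, ∀ i, c Γ i ∈ connectedRootedAt (c Γ i).card (σ i)) :
    ∑ Γ ∈ F, ∏ X ∈ Γ, w X ≤ compositionSum A k m := by
  have hsizes : ∀ Γ ∈ F, (fun i => (c Γ i).card) ∈
      (Finset.Nat.antidiagonalTuple k m).filter (fun t => ∀ i, 1 ≤ t i) := by
    intro Γ hΓ
    refine mem_filter.2 ⟨Finset.Nat.mem_antidiagonalTuple.2 ?_, fun i =>
      one_le_card_of_mem_connectedRootedAt (hconn Γ hΓ i)⟩
    rw [← hcard Γ hΓ, ← card_biUnion fun i _ j _ hij => hdisj Γ hΓ hij, hunion Γ hΓ]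
  rw [compositionSum, ← sum_fiberwise_of_maps_to hsizes]
  refine sum_le_sum fun t _ => ?_
  calc ∑ Γ ∈ F.filter (fun Γ => (fun i => (c Γ i).card) = t), ∏ X ∈ Γ, w X
      = ∑ Γ ∈ F.filter (fun Γ => (fun i => (c Γ i).card) = t), ∏ i, ∏ X ∈ c Γ i, w X := by
        refine sum_congr rfl fun Γ hΓ => ?_
        have hΓF := (mem_filter.1 hΓ).1
        rw [← prod_biUnion fun i _ j _ hij => hdisj Γ hΓF hij, hunion Γ hΓF]
    _ ≤ ∏ i, ∑ C ∈ connectedRootedAt (t i) (σ i), ∏ X ∈ C, w X := by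
        rw [prod_univ_sum]
        refine sum_comp_le_sum_of_injOn (g := fun g => ∏ i, ∏ X ∈ g i, w X) c
          (fun Γ hΓ => ?_) (fun Γ hΓ Γ' hΓ' h => ?_)
          fun g _ => prod_nonneg fun i _ => prod_nonneg fun X _ => hw X
        · obtain ⟨hΓF, rfl⟩ := mem_filter.1 hΓ
          exact Fintype.mem_piFinset.2 (hconn Γ hΓF)
        · rw [← hunion Γ (mem_filter.1 hΓ).1, ← hunion Γ' (mem_filter.1 hΓ').1]
          exact congrArg _ h
    _ ≤ ∏ i, A (t i) :=
        prod_le_prod (fun i _ => sum_nonneg fun C _ => prod_nonneg fun X _ => hw X)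
          fun i _ => hA _ _

theorem sum_connectedRootedAt_le (hw : ∀ X, 0 ≤ w X) (n : ℕ) (e : E) :
    ∑ Γ ∈ connectedRootedAt n e, ∏ X ∈ Γ, w X ≤
      ∑ X₁ ∈ univ.filter (e ∈ ·), w X₁ * ∑ Γ ∈ connectedExtensions X₁ (n - 1), ∏ X ∈ Γ, w X := by
  set pairs := (univ.filter (e ∈ ·)).sigma fun X₁ => connectedExtensions X₁ (n - 1)
  have hsurj : connectedRootedAt n e ⊆ pairs.image fun q => insert q.1 q.2 := by
    intro Γ hΓ
    obtain ⟨-, hne, hconn, hcard, he⟩ := mem_filter.1 hΓ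
    obtain ⟨X₁, hX₁, heX₁⟩ := Finset.mem_sup.1 he
    refine mem_image.2 ⟨⟨X₁, Γ.erase X₁⟩, mem_sigma.2 ⟨mem_filter.2 ⟨mem_univ _, heX₁⟩, ?_⟩,
      insert_erase hX₁⟩
    refine mem_filter.2 ⟨mem_univ _, notMem_erase _ _, fun X hX => hne X (mem_of_mem_erase hX),
      (insert_erase hX₁).symm ▸ hconn, ?_⟩
    rw [card_erase_of_mem hX₁, hcard]
  have hW : ∀ Γ : Finset (Finset E), 0 ≤ ∏ X ∈ Γ, w X := fun Γ => prod_nonneg fun X _ => hw X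
  calc ∑ Γ ∈ connectedRootedAt n e, ∏ X ∈ Γ, w X
      ≤ ∑ Γ ∈ pairs.image fun q => insert q.1 q.2, ∏ X ∈ Γ, w X :=
        sum_le_sum_of_subset_of_nonneg hsurj fun Γ _ _ => hW Γ
    _ ≤ ∑ q ∈ pairs, ∏ X ∈ insert q.1 q.2, w X := sum_image_le_of_nonneg fun Γ _ => hW Γ
    _ = _ := by
        rw [sum_sigma]
        refine sum_congr rfl fun X₁ _ => ?_
        rw [mul_sum]
        exact sum_congr rfl fun Γ hΓ => prod_insert (mem_filter.1 hΓ).2.1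

section Roots

variable [LinearOrder E]

/-- Each component of `Γ` that meets `X₁` is rooted at its smallest point in `X₁`. -/
noncomputable def roots (X₁ : Finset E) (Γ : Finset (Finset E)) : Finset E :=
  X₁.filter fun s => s ∈ Γ.sup id ∧ ∀ t ∈ X₁, Joined Γ s t → s ≤ t

theorem roots_subset : roots X₁ Γ ⊆ X₁ := filter_subset _ _

theorem mem_sup_of_mem_roots {s : E} (hs : s ∈ roots X₁ Γ) : s ∈ Γ.sup id :=
  (mem_filter.1 hs).2.1

theorem disjoint_component_of_mem_roots {s t : E} (hs : s ∈ roots X₁ Γ)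
    (ht : t ∈ roots X₁ Γ) (hst : s ≠ t) : Disjoint (component Γ s) (component Γ t) := by
  refine disjoint_left.2 fun X hXs hXt => hst ?_
  obtain ⟨-, x, hx, hsx⟩ := mem_component.1 hXs
  have hjoin : Joined Γ s t := hsx.trans (joined_of_mem_component hXt hx).symm
  obtain ⟨hsX₁, -, hs_min⟩ := mem_filter.1 hs
  obtain ⟨htX₁, -, ht_min⟩ := mem_filter.1 ht
  exact le_antisymm (hs_min t htX₁ hjoin) (ht_min s hsX₁ hjoin.symm)

theorem biUnion_roots_component (hne : ∀ X ∈ Γ, X.Nonempty)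
    (hmeet : ∀ a ∈ Γ.sup id, ∃ s ∈ X₁, Joined Γ a s) :
    (roots X₁ Γ).biUnion (component Γ) = Γ := by
  refine Subset.antisymm (biUnion_subset.2 fun _ _ => component_subset) fun X hX => ?_
  obtain ⟨x, hx⟩ := hne X hX
  have hxΓ : x ∈ Γ.sup id := le_sup (f := id) hX hx
  have hT : (X₁.filter (Joined Γ x)).Nonempty := by
    obtain ⟨s, hs, hxs⟩ := hmeet x hxΓ
    exact ⟨s, mem_filter.2 ⟨hs, hxs⟩⟩
  obtain ⟨hsX₁, hxs⟩ := mem_filter.1 (min'_mem _ hT)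
  refine mem_biUnion.2 ⟨_, mem_filter.2 ⟨hsX₁, hxs.mem_sup hxΓ, fun t ht hst => ?_⟩,
    mem_component.2 ⟨hX, x, hx, hxs.symm⟩⟩
  exact min'_le _ _ (mem_filter.2 ⟨ht, hxs.trans hst⟩)

theorem sum_filter_roots_eq_le_compositionSum (hw : ∀ X, 0 ≤ w X)
    (hA : ∀ s n, ∑ C ∈ connectedRootedAt n s, ∏ X ∈ C, w X ≤ A n)
    (hX₁ : X₁.Nonempty) (m : ℕ) (S : Finset E) :
    ∑ Γ ∈ (connectedExtensions X₁ m).filter (roots X₁ · = S), ∏ X ∈ Γ, w X ≤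
      compositionSum A S.card m := by
  set σ := S.orderEmbOfFin rfl
  have hσ : ∀ i, σ i ∈ S := fun i => orderEmbOfFin_mem S rfl i
  have hσ_image : univ.image σ = S := by convert image_orderEmbOfFin_univ S rfl
  refine sum_prod_le_compositionSum σ (fun Γ i => component Γ (σ i)) hw hA
    (fun Γ hΓ => ?_) (fun Γ hΓ => ?_) (fun Γ hΓ i j hij => ?_) (fun Γ hΓ i => ?_) <;>
  obtain ⟨hΓm, rfl⟩ := mem_filter.1 hΓ <;>
  obtain ⟨-, -, hne, hconn, hcard⟩ := mem_filter.1 hΓm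
  · exact hcard
  · rw [← image_biUnion, hσ_image]
    exact biUnion_roots_component hne fun a ha => hconn.exists_joined_of_insert hX₁ ha
  · exact disjoint_component_of_mem_roots (hσ i) (hσ j) (σ.injective.ne hij)
  · exact component_mem_connectedRootedAt hne (mem_sup_of_mem_roots (hσ i))

theorem sum_connectedExtensions_le (hw : ∀ X, 0 ≤ w X)
    (hA : ∀ s n, ∑ C ∈ connectedRootedAt n s, ∏ X ∈ C, w X ≤ A n)
    (hX₁ : X₁.Nonempty) (m : ℕ) :
    ∑ Γ ∈ connectedExtensions X₁ m, ∏ X ∈ Γ, w X ≤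
      ∑ k ∈ range (X₁.card + 1), (X₁.card.choose k : ℝ) * compositionSum A k m :=
  calc ∑ Γ ∈ connectedExtensions X₁ m, ∏ X ∈ Γ, w X
      = ∑ S ∈ X₁.powerset, ∑ Γ ∈ (connectedExtensions X₁ m).filter (roots X₁ · = S),
          ∏ X ∈ Γ, w X :=
        (sum_fiberwise_of_maps_to (fun _ _ => mem_powerset.2 roots_subset) _).symm
    _ ≤ ∑ S ∈ X₁.powerset, compositionSum A S.card m :=
        sum_le_sum fun S _ => sum_filter_roots_eq_le_compositionSum hw hA hX₁ m S
    _ = _ := by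
        rw [sum_powerset_apply_card (fun k => compositionSum A k m)]
        simp only [nsmul_eq_mul]

end Roots

theorem sum_range_choose_mul_le_of_le {f : ℕ → ℝ} (hf : ∀ k, 0 ≤ f k) {N p : ℕ}
    (hNp : N ≤ p) :
    ∑ k ∈ range (N + 1), (N.choose k : ℝ) * f k ≤
      ∑ k ∈ range (p + 1), (p.choose k : ℝ) * f k :=
  calc ∑ k ∈ range (N + 1), (N.choose k : ℝ) * f k
      ≤ ∑ k ∈ range (N + 1), (p.choose k : ℝ) * f k :=
        sum_le_sum fun k _ => mul_le_mul_of_nonneg_right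
          (Nat.cast_le.2 (Nat.choose_le_choose k hNp)) (hf k)
    _ ≤ ∑ k ∈ range (p + 1), (p.choose k : ℝ) * f k :=
        sum_le_sum_of_subset_of_nonneg (range_subset_range.2 (by omega))
          fun k _ _ => mul_nonneg (Nat.cast_nonneg _) (hf k)

theorem compositionSum_nonneg (hA : ∀ n, 0 ≤ A n) (k m : ℕ) : 0 ≤ compositionSum A k m :=
  sum_nonneg fun _ _ => prod_nonneg fun _ _ => hA _

theorem sum_choose_mul_compositionSum_zero (p : ℕ) :
    ∑ k ∈ range (p + 1), (p.choose k : ℝ) * compositionSum A k 0 = 1 := by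
  rw [sum_eq_single_of_mem 0 (mem_range.2 p.succ_pos)]
  · simp [compositionSum, Finset.Nat.antidiagonalTuple_zero_right]
  · intro k _ hk
    refine mul_eq_zero_of_right _ (sum_eq_zero fun t ht => ?_)
    obtain ⟨ht0, hpos⟩ := mem_filter.1 ht
    rw [Finset.Nat.antidiagonalTuple_zero_right, mem_singleton] at ht0
    exact absurd (hpos ⟨0, Nat.pos_of_ne_zero hk⟩) (by simp [ht0])

variable {K : Finset E → ℝ} {M : ℝ} {p : ℕ}

theorem rootedSup_nonneg (hM : 0 ≤ M) (n : ℕ) : 0 ≤ rootedSup K M n :=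
  Real.iSup_nonneg fun _ => sum_nonneg fun _ _ => prod_nonneg fun X _ => linkWeight_nonneg hM X

theorem sum_connectedRootedAt_linkWeight_le_rootedSup (s : E) (n : ℕ) :
    ∑ C ∈ connectedRootedAt n s, ∏ X ∈ C, linkWeight K M X ≤ rootedSup K M n :=
  le_ciSup (f := rootedContribution K M n) (Finite.bddAbove_range _) s

theorem linkWeight_mul_sum_connectedExtensions_le (hM : 1 ≤ M)
    (hfin : ∀ X : Finset E, p < X.card → K X = 0) (hX₁ : X₁.Nonempty) (m : ℕ) :
    linkWeight K M X₁ * ∑ Γ ∈ connectedExtensions X₁ m, ∏ X ∈ Γ, linkWeight K M X ≤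
      |K X₁| * (2 * M ^ p * ∑ k ∈ range (p + 1),
        (p.choose k : ℝ) * compositionSum (rootedSup K M) k m) := by
  let _ : LinearOrder E := LinearOrder.lift' _ (Fintype.equivFin E).injective
  have hM0 : 0 ≤ M := zero_le_one.trans hM
  have hw := linkWeight_nonneg (K := K) hM0
  have hA := sum_connectedRootedAt_linkWeight_le_rootedSup (K := K) (M := M)
  by_cases hc : X₁.card ≤ p
  · calc linkWeight K M X₁ * ∑ Γ ∈ connectedExtensions X₁ m, ∏ X ∈ Γ, linkWeight K M X
        ≤ 2 * |K X₁| * M ^ p * ∑ k ∈ range (p + 1),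
            (p.choose k : ℝ) * compositionSum (rootedSup K M) k m :=
          mul_le_mul (mul_le_mul_of_nonneg_left (pow_le_pow_right₀ hM hc) (by positivity))
            ((sum_connectedExtensions_le hw hA hX₁ m).trans
              (sum_range_choose_mul_le_of_le (compositionSum_nonneg (rootedSup_nonneg hM0) · _) hc))
            (sum_nonneg fun Γ _ => prod_nonneg fun X _ => hw X)
            (mul_nonneg (by positivity) (pow_nonneg hM0 _))
      _ = _ := by ring
  · simp [linkWeight, hfin X₁ (not_le.1 hc)]

theorem rootedSup_le (hM : 1 ≤ M) (hfin : ∀ X : Finset E, p < X.card → K X = 0) (n : ℕ) :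
    rootedSup K M n ≤ 2 * (⨆ e : E, ∑ X ∈ univ.filter (e ∈ ·), |K X|) * M ^ p *
      ∑ k ∈ range (p + 1), (p.choose k : ℝ) * compositionSum (rootedSup K M) k (n - 1) := by
  set R := ∑ k ∈ range (p + 1), (p.choose k : ℝ) * compositionSum (rootedSup K M) k (n - 1)
  have hM0 : 0 ≤ M := zero_le_one.trans hM
  have hR : 0 ≤ R := sum_nonneg fun k _ =>
    mul_nonneg (Nat.cast_nonneg _) (compositionSum_nonneg (rootedSup_nonneg hM0) _ _)
  have hnorm : 0 ≤ ⨆ e : E, ∑ X ∈ univ.filter (e ∈ ·), |K X| :=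
    Real.iSup_nonneg fun _ => sum_nonneg fun _ _ => abs_nonneg _
  have hfactor : 0 ≤ 2 * M ^ p * R := mul_nonneg (mul_nonneg zero_le_two (pow_nonneg hM0 _)) hR
  refine Real.iSup_le (fun e => ?_)
    (mul_nonneg (mul_nonneg (mul_nonneg zero_le_two hnorm) (pow_nonneg hM0 _)) hR)
  calc rootedContribution K M n e
      = ∑ Γ ∈ connectedRootedAt n e, ∏ X ∈ Γ, linkWeight K M X := rfl
    _ ≤ ∑ X₁ ∈ univ.filter (e ∈ ·), |K X₁| * (2 * M ^ p * R) :=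
        (sum_connectedRootedAt_le (linkWeight_nonneg hM0) n e).trans (sum_le_sum fun X₁ hX₁ =>
          linkWeight_mul_sum_connectedExtensions_le hM hfin ⟨e, (mem_filter.1 hX₁).2⟩ _)
    _ ≤ (⨆ e : E, ∑ X ∈ univ.filter (e ∈ ·), |K X|) * (2 * M ^ p * R) := by
        rw [← sum_mul]
        exact mul_le_mul_of_nonneg_right (le_ciSup (f := fun e => ∑ X ∈ univ.filter (e ∈ ·),
          |K X|) (Finite.bddAbove_range _) e) hfactor
    _ = _ := by ring

end ClusterExpansion

theorem rooted_contribution_recursive_bound_general {E : Type*} [Fintype E] [DecidableEq E]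
    (p : ℕ) (M : ℝ) (hM : 1 < M) (K : Finset E → ℝ)
    (hfin : ∀ X : Finset E, p < X.card → K X = 0) :
    rootedSup K M 1 ≤
      2 * (⨆ e : E, ∑ X ∈ Finset.univ.filter (fun X : Finset E => e ∈ X), |K X|) * M ^ p ∧
    ∀ n : ℕ, 1 ≤ n →
      rootedSup K M n ≤
        2 * (⨆ e : E, ∑ X ∈ Finset.univ.filter (fun X : Finset E => e ∈ X), |K X|) * M ^ p *
          ∑ k ∈ Finset.range (p + 1), (p.choose k : ℝ) *
            ∑ t ∈ (Finset.Nat.antidiagonalTuple k (n - 1)).filter (fun t => ∀ i, 1 ≤ t i),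
              ∏ i, rootedSup K M (t i) := by
  have hbound := ClusterExpansion.rootedSup_le hM.le hfin
  refine ⟨?_, fun n _ => hbound n⟩
  have h₁ := hbound 1
  rwa [Nat.sub_self, ClusterExpansion.sum_choose_mul_compositionSum_zero, mul_one] at h₁

/-- `a_1 ≤ 2||K||M^p`, and for all `n ≥ 1` the recursive bound
`a_n ≤ 2||K||M^p Σ_{k=0}^p C(p,k) Σ_{n_1+…+n_k = n−1, n_i ≥ 1} a_{n_1} ⋯ a_{n_k}` holds,
where `||K|| = sup_{e ∈ E} Σ_{X : e ∈ X} |K(X)|`. -/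
theorem rooted_contribution_recursive_bound {E : Type*} [Fintype E] [DecidableEq E]
    (p : ℕ) (hp : 2 ≤ p) (M : ℝ) (hM : 1 < M) (K : Finset E → ℝ)
    (hfin : ∀ X : Finset E, p < X.card → K X = 0) :
    rootedSup K M 1 ≤
      2 * (⨆ e : E, ∑ X ∈ Finset.univ.filter (fun X : Finset E => e ∈ X), |K X|) * M ^ p ∧
    ∀ n : ℕ, 1 ≤ n →
      rootedSup K M n ≤
        2 * (⨆ e : E, ∑ X ∈ Finset.univ.filter (fun X : Finset E => e ∈ X), |K X|) * M ^ p *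
          ∑ k ∈ Finset.range (p + 1), (p.choose k : ℝ) *
            ∑ t ∈ (Finset.Nat.antidiagonalTuple k (n - 1)).filter (fun t => ∀ i, 1 ≤ t i),
              ∏ i, rootedSup K M (t i) :=
  rooted_contribution_recursive_bound_general p M hM K hfin
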